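/- arXiv:1812.09016 — 5 statements merged into one kernel-verified Lean document; each statement's English description precedes it below -/
import Mathlib

section
/- Let ξ₁,…,ξ_m be independent real random variables, and suppose there exist η > 0 and τ ∈ (0,1) such that P(|ξ_k| ≤ η) ≤ τ for all k ≤ m. Then for every ε ∈ (0,1], P(‖(ξ₁,…,ξ_m)‖₂ ≤ η·√(ε·m)) ≤ (e/ε)^{ε m} · τ^{m - ε m}. -/
/-!
If the Euclidean norm of `(ξ₁,…,ξ_m)` is at most `η√(εm)`, then at most `k = ⌊εm⌋` coordinates
exceed `η` in absolute value, so some `m - k` coordinates are all at most `η`. By independence each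
such set of coordinates is small simultaneously with probability at most `τ^(m-k)`, and there are
`C(m,k)` of them. Finally `C(m,k) ε^k ≤ (1 + ε)^m ≤ e^{εm}` gives `C(m,k) ≤ (e/ε)^{εm}`.
-/

open MeasureTheory ProbabilityTheory Finset

lemma Nat.choose_mul_pow_le_one_add_pow {R : Type*} [CommSemiring R] [PartialOrder R]
    [IsOrderedRing R] (m k : ℕ) {x : R} (hx : 0 ≤ x) :
    (m.choose k : R) * x ^ k ≤ (1 + x) ^ m := by
  rcases lt_or_ge m k with hmk | hkm
  · simp [Nat.choose_eq_zero_of_lt hmk, add_nonneg zero_le_one hx]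
  · rw [add_comm, add_pow, mul_comm]
    simp only [one_pow, mul_one]
    exact single_le_sum (f := fun j ↦ x ^ j * (m.choose j : R))
      (fun j _ ↦ mul_nonneg (pow_nonneg hx j) (Nat.cast_nonneg _))
      (mem_range.2 (Nat.lt_succ_of_le hkm))

lemma Nat.choose_le_exp_one_div_rpow {m k : ℕ} {ε : ℝ} (hε0 : 0 < ε) (hε1 : ε ≤ 1)
    (hk : (k : ℝ) ≤ ε * m) :
    (m.choose k : ℝ) ≤ (Real.exp 1 / ε) ^ (ε * m) := by
  have hεk : ε ^ (ε * m) ≤ ε ^ k := by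
    rw [← Real.rpow_natCast]
    exact Real.rpow_le_rpow_of_exponent_ge hε0 hε1 hk
  have hbinom : (m.choose k : ℝ) * ε ^ k ≤ Real.exp (ε * m) :=
    calc (m.choose k : ℝ) * ε ^ k ≤ (1 + ε) ^ m := m.choose_mul_pow_le_one_add_pow k hε0.le
      _ ≤ Real.exp ε ^ m := by
        gcongr
        linarith [Real.add_one_le_exp ε]
      _ = Real.exp (ε * m) := by rw [← Real.exp_nat_mul, mul_comm]
  rw [Real.div_rpow (Real.exp_pos 1).le hε0.le, Real.exp_one_rpow,
    le_div_iff₀ (Real.rpow_pos_of_pos hε0 _)]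
  calc (m.choose k : ℝ) * ε ^ (ε * m) ≤ m.choose k * ε ^ k := by gcongr
    _ ≤ Real.exp (ε * m) := hbinom

lemma card_lt_abs_mul_sq_le_sum_sq {ι : Type*} [Fintype ι] (x : ι → ℝ) {η : ℝ} (hη : 0 ≤ η) :
    (#{i | η < |x i|} : ℝ) * η ^ 2 ≤ ∑ i, x i ^ 2 :=
  calc (#{i | η < |x i|} : ℝ) * η ^ 2 = ∑ i with η < |x i|, η ^ 2 := by
        rw [sum_const, nsmul_eq_mul]
    _ ≤ ∑ i with η < |x i|, x i ^ 2 := sum_le_sum fun i hi ↦ by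
        rw [← sq_abs (x i)]
        exact pow_le_pow_left₀ hη (mem_filter.1 hi).2.le 2
    _ ≤ ∑ i, x i ^ 2 :=
        sum_le_sum_of_subset_of_nonneg (subset_univ _) fun i _ _ ↦ sq_nonneg (x i)

lemma card_sub_floor_le_card_abs_le {ι : Type*} [Fintype ι] {x : ι → ℝ} {η c : ℝ} (hη : 0 < η)
    (hc : 0 ≤ c) (h : √(∑ i, x i ^ 2) ≤ η * √c) :
    Fintype.card ι - ⌊c⌋₊ ≤ #{i | |x i| ≤ η} := by
  have hsum : ∑ i, x i ^ 2 ≤ η ^ 2 * c := by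
    simpa only [mul_pow, Real.sq_sqrt hc] using (Real.sqrt_le_left (by positivity)).1 h
  have hlarge : #{i | η < |x i|} ≤ ⌊c⌋₊ := Nat.le_floor <| le_of_mul_le_mul_right
    (by nlinarith [card_lt_abs_mul_sq_le_sum_sq x hη.le]) (pow_pos hη 2)
  have hsplit := card_filter_add_card_filter_not (s := univ) fun i ↦ η < |x i|
  simp only [card_univ, not_lt] at hsplit
  omega

lemma ProbabilityTheory.iIndepFun.measure_le_card_mem_le_choose_mul_pow {Ω ι : Type*}
    [MeasurableSpace Ω] {μ : Measure Ω} [Fintype ι] {β : ι → Type*}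
    {mβ : ∀ i, MeasurableSpace (β i)} {f : ∀ i, Ω → β i} (hf : iIndepFun f μ)
    {B : ∀ i, Set (β i)} [∀ i, DecidablePred (· ∈ B i)] (hB : ∀ i, MeasurableSet (B i))
    {p : ENNReal} (hp : ∀ i, μ (f i ⁻¹' B i) ≤ p) (n : ℕ) :
    μ {ω | n ≤ #{i | f i ω ∈ B i}} ≤ (Fintype.card ι).choose n * p ^ n := by
  have hsub : {ω | n ≤ #{i | f i ω ∈ B i}} ⊆
      ⋃ T ∈ univ.powersetCard n, ⋂ i ∈ T, f i ⁻¹' B i := by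
    intro ω hω
    obtain ⟨T, hT, hTcard⟩ := exists_subset_card_eq hω
    exact Set.mem_biUnion (mem_powersetCard.2 ⟨subset_univ T, hTcard⟩)
      (Set.mem_iInter₂.2 fun i hi ↦ (mem_filter.1 (hT hi)).2)
  calc μ {ω | n ≤ #{i | f i ω ∈ B i}}
      ≤ ∑ T ∈ univ.powersetCard n, μ (⋂ i ∈ T, f i ⁻¹' B i) :=
        (measure_mono hsub).trans (measure_biUnion_finset_le _ _)
    _ ≤ ∑ _T ∈ univ.powersetCard n, p ^ n := sum_le_sum fun T hT ↦ by
        rw [hf.meas_biInter fun i _ ↦ ⟨B i, hB i, rfl⟩, ← (mem_powersetCard.1 hT).2]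
        exact prod_le_pow_card _ _ _ fun i _ ↦ hp i
    _ = (Fintype.card ι).choose n * p ^ n := by
        rw [sum_const, card_powersetCard, card_univ, nsmul_eq_mul]

theorem stmt_2_general {Ω : Type*} [MeasurableSpace Ω] (P : Measure Ω)
    (m : ℕ) (ξ : Fin m → Ω → ℝ)
    (hindep : iIndepFun ξ P)
    (η τ : ℝ) (hη : 0 < η) (hτ : τ ∈ Set.Ioo (0:ℝ) 1)
    (hsmall : ∀ k, P {ω | |ξ k ω| ≤ η} ≤ ENNReal.ofReal τ) :
    ∀ ε : ℝ, ε ∈ Set.Ioc (0:ℝ) 1 →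
      P {ω | Real.sqrt (∑ i, (ξ i ω) ^ 2) ≤ η * Real.sqrt (ε * m)}
        ≤ ENNReal.ofReal ((Real.exp 1 / ε) ^ (ε * m) * τ ^ ((m : ℝ) - ε * m)) := by
  rintro ε ⟨hε0, hε1⟩
  obtain ⟨hτ0, hτ1⟩ := hτ
  set k := ⌊ε * m⌋₊
  have hk : (k : ℝ) ≤ ε * m := Nat.floor_le (by positivity)
  have hkm : k ≤ m := by
    exact_mod_cast hk.trans (mul_le_of_le_one_left m.cast_nonneg hε1)
  have hτk : τ ^ (m - k) ≤ τ ^ ((m : ℝ) - ε * m) := by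
    rw [← Real.rpow_natCast, Nat.cast_sub hkm]
    exact Real.rpow_le_rpow_of_exponent_ge hτ0 hτ1.le (by linarith)
  calc P {ω | √(∑ i, ξ i ω ^ 2) ≤ η * √(ε * m)}
      ≤ P {ω | m - k ≤ #{i | ξ i ω ∈ {x : ℝ | |x| ≤ η}}} := measure_mono fun ω hω ↦ by
        simpa using card_sub_floor_le_card_abs_le hη (by positivity) hω
    _ ≤ m.choose (m - k) * ENNReal.ofReal τ ^ (m - k) := by
        simpa using hindep.measure_le_card_mem_le_choose_mul_pow
          (fun _ ↦ measurableSet_le measurable_abs measurable_const) hsmall (m - k)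
    _ = ENNReal.ofReal (m.choose k * τ ^ (m - k)) := by
        rw [ENNReal.ofReal_mul (by positivity), ENNReal.ofReal_pow hτ0.le, ENNReal.ofReal_natCast,
          Nat.choose_symm hkm]
    _ ≤ _ := ENNReal.ofReal_le_ofReal <| mul_le_mul (Nat.choose_le_exp_one_div_rpow hε0 hε1 hk)
        hτk (by positivity) (by positivity)

/-- Tensorization: if each `|ξ_k|` is small with probability at most `τ`, then
the Euclidean norm of `(ξ₁,…,ξ_m)` is at most `η√(εm)` with probability at most
`(e/ε)^{εm} · τ^{m-εm}`. -/
theorem stmt_2 {Ω : Type*} [MeasurableSpace Ω] (P : Measure Ω)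
    [IsProbabilityMeasure P] (m : ℕ) (ξ : Fin m → Ω → ℝ)
    (hmeas : ∀ k, Measurable (ξ k))
    (hindep : iIndepFun ξ P)
    (η τ : ℝ) (hη : 0 < η) (hτ : τ ∈ Set.Ioo (0:ℝ) 1)
    (hsmall : ∀ k, P {ω | |ξ k ω| ≤ η} ≤ ENNReal.ofReal τ) :
    ∀ ε : ℝ, ε ∈ Set.Ioc (0:ℝ) 1 →
      P {ω | Real.sqrt (∑ i, (ξ i ω) ^ 2) ≤ η * Real.sqrt (ε * m)}
        ≤ ENNReal.ofReal ((Real.exp 1 / ε) ^ (ε * m) * τ ^ ((m : ℝ) - ε * m)) :=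
  stmt_2_general P m ξ hindep η τ hη hτ hsmall
end

section
/- Let f ∈ ℓ₁(ℤ) be non-negative, let m, N ∈ ℕ, p ∈ (0,1), H, μ > 0, and suppose ‖f‖_∞ ≤ 2H and for every integer interval I of cardinality N, |{t ∈ I : f(t) ≥ H}| ≤ μN. Fix integers x₁,…,x_m and define f̃(t) := E_b[f(t + b₁x₁ + … + b_m x_m)], where b₁,…,b_m are independent Bernoulli(p) random variables. Then for every integer interval J of cardinality N, |{t ∈ J : f̃(t) ≥ √2·H}| ≤ μN/(√2 - 1). -/
/-! Since `f ≤ 2H`, pointwise `f ≤ H + H·𝟙[f ≥ H]`, so `f̃ ≤ H + H·g` where `g` is the Bernoulli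
average of translates of the spike indicator `𝟙[f ≥ H]`. Each translate has at most `μN` spikes in a
window of length `N`, hence so does the average `g` in total mass. A point with `f̃ ≥ √2·H` has
`g ≥ √2 - 1`, and Markov's inequality on the window bounds the number of such points. -/

open Finset

section BernoulliWeight

variable {m : ℕ}

def bernoulliWeight (p : ℝ) (v : Fin m → Bool) : ℝ :=
  p ^ #{i | v i} * (1 - p) ^ (m - #{i | v i})

lemma bernoulliWeight_eq_prod (p : ℝ) (v : Fin m → Bool) :
    bernoulliWeight p v = ∏ i, if v i then p else 1 - p := by
  rw [prod_ite, prod_const, prod_const, bernoulliWeight, filter_not,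
    card_sdiff_of_subset (filter_subset _ _)]
  simp

lemma sum_bernoulliWeight (p : ℝ) : ∑ v : Fin m → Bool, bernoulliWeight p v = 1 := by
  simp_rw [bernoulliWeight_eq_prod]
  rw [← Fintype.prod_sum (fun (_ : Fin m) (b : Bool) => if b then p else 1 - p)]
  simp

lemma bernoulliWeight_nonneg {p : ℝ} (hp0 : 0 ≤ p) (hp1 : p ≤ 1) (v : Fin m → Bool) :
    0 ≤ bernoulliWeight p v :=
  mul_nonneg (pow_nonneg hp0 _) (pow_nonneg (sub_nonneg.2 hp1) _)

end BernoulliWeight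

lemma sum_Icc_comp_add_right (φ : ℤ → ℝ) (a b c : ℤ) :
    ∑ t ∈ Icc a b, φ (t + c) = ∑ t ∈ Icc (a + c) (b + c), φ t := by
  rw [← map_add_right_Icc, sum_map]
  rfl

section Averaging

variable {ι : Type*} [Fintype ι] {w : ι → ℝ}

lemma sum_mul_le_add_mul_sum_mul_ite (hw0 : ∀ i, 0 ≤ w i) (hw1 : ∑ i, w i = 1) {H : ℝ}
    {y : ι → ℝ} (hy : ∀ i, y i ≤ 2 * H) :
    ∑ i, w i * y i ≤ H + H * ∑ i, w i * if H ≤ y i then 1 else 0 := by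
  have key : ∀ i, y i ≤ H + H * if H ≤ y i then 1 else 0 := by
    intro i
    split_ifs with h
    · linarith [hy i]
    · linarith
  calc ∑ i, w i * y i ≤ ∑ i, w i * (H + H * if H ≤ y i then 1 else 0) :=
        sum_le_sum fun i _ => mul_le_mul_of_nonneg_left (key i) (hw0 i)
    _ = H + H * ∑ i, w i * if H ≤ y i then 1 else 0 := by
        simp only [mul_add, sum_add_distrib, ← sum_mul, hw1, mul_sum]
        ring_nf

lemma sum_Icc_sum_mul_comp_add_le (hw0 : ∀ i, 0 ≤ w i) (hw1 : ∑ i, w i = 1) {φ : ℤ → ℝ}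
    {N : ℕ} {B : ℝ} (hB : ∀ a : ℤ, ∑ t ∈ Icc a (a + N - 1), φ t ≤ B) (s : ι → ℤ) (a : ℤ) :
    ∑ t ∈ Icc a (a + N - 1), ∑ i, w i * φ (t + s i) ≤ B := by
  calc ∑ t ∈ Icc a (a + N - 1), ∑ i, w i * φ (t + s i)
      = ∑ i, w i * ∑ t ∈ Icc (a + s i) (a + s i + N - 1), φ t := by
        rw [sum_comm]
        refine sum_congr rfl fun i _ => ?_
        rw [← mul_sum, sum_Icc_comp_add_right]
        ring_nf
    _ ≤ ∑ i, w i * B := sum_le_sum fun i _ => mul_le_mul_of_nonneg_left (hB _) (hw0 i)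
    _ = B := by rw [← sum_mul, hw1, one_mul]

end Averaging

lemma card_filter_mul_le_sum {α : Type*} (s : Finset α) {g : α → ℝ} (hg : ∀ t ∈ s, 0 ≤ g t)
    (c : ℝ) [DecidablePred (c ≤ g ·)] : #{t ∈ s | c ≤ g t} * c ≤ ∑ t ∈ s, g t := by
  calc #{t ∈ s | c ≤ g t} * c ≤ ∑ t ∈ s with c ≤ g t, g t := by
        simpa using card_nsmul_le_sum _ g c fun t ht => (mem_filter.1 ht).2
    _ ≤ ∑ t ∈ s, g t := sum_le_sum_of_subset_of_nonneg (filter_subset _ _) fun t ht _ => hg t ht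

theorem stmt_7_general (f : ℤ → ℝ) (m N : ℕ) (p : ℝ) (hp : p ∈ Set.Ioo (0:ℝ) 1) (H μ : ℝ) (hH : 0 < H)
    (hbd : ∀ t, f t ≤ 2 * H)
    (hspikes : ∀ a : ℤ,
      (((Finset.Icc a (a + N - 1)).filter (fun t => H ≤ f t)).card : ℝ) ≤ μ * N)
    (x : Fin m → ℤ) (ft : ℤ → ℝ)
    (hft : ∀ t, ft t = ∑ v : Fin m → Bool,
      p ^ (Finset.univ.filter (fun i => v i)).card
        * (1 - p) ^ (m - (Finset.univ.filter (fun i => v i)).card)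
        * f (t + ∑ i ∈ Finset.univ.filter (fun i => v i), x i)) :
    ∀ a : ℤ,
      (((Finset.Icc a (a + N - 1)).filter (fun t => Real.sqrt 2 * H ≤ ft t)).card : ℝ)
        ≤ μ * N / (Real.sqrt 2 - 1) := by
  intro a
  have hw0 := bernoulliWeight_nonneg (m := m) hp.1.le hp.2.le
  set spike : ℤ → ℝ := fun t => if H ≤ f t then 1 else 0
  set g : ℤ → ℝ := fun t => ∑ v : Fin m → Bool,
    bernoulliWeight p v * spike (t + ∑ i ∈ univ.filter (fun i => v i), x i)
  have hg0 : ∀ t, 0 ≤ g t := fun t =>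
    sum_nonneg fun v _ => mul_nonneg (hw0 v) (by positivity)
  have hft_le : ∀ t, ft t ≤ H + H * g t := fun t =>
    (hft t).trans_le <| sum_mul_le_add_mul_sum_mul_ite hw0 (sum_bernoulliWeight p) fun _ => hbd _
  have hg_window : ∑ t ∈ Icc a (a + N - 1), g t ≤ μ * N :=
    sum_Icc_sum_mul_comp_add_le hw0 (sum_bernoulliWeight p)
      (fun b => by simpa [spike, sum_boole] using hspikes b) _ a
  have hsub : {t ∈ Icc a (a + N - 1) | √2 * H ≤ ft t} ⊆
      {t ∈ Icc a (a + N - 1) | √2 - 1 ≤ g t} :=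
    monotone_filter_right _ fun t _ ht => by nlinarith [ht.trans (hft_le t)]
  have hsqrt : 0 < √2 - 1 := sub_pos.2 Real.one_lt_sqrt_two
  rw [le_div_iff₀ hsqrt]
  calc (#{t ∈ Icc a (a + N - 1) | √2 * H ≤ ft t} : ℝ) * (√2 - 1)
      ≤ #{t ∈ Icc a (a + N - 1) | √2 - 1 ≤ g t} * (√2 - 1) := by gcongr
    _ ≤ ∑ t ∈ Icc a (a + N - 1), g t := card_filter_mul_le_sum _ (fun t _ => hg0 t) _
    _ ≤ μ * N := hg_window

/-- Bernoulli averaging does not create many new spikes: if `f ≤ 2H` and every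
integer interval of length `N` contains at most `μN` points where `f ≥ H`, then
every such interval contains at most `μN/(√2-1)` points where the Bernoulli
average `f̃` is at least `√2·H`. -/
theorem stmt_7 (f : ℤ → ℝ) (hf0 : ∀ t, 0 ≤ f t) (hsum : Summable (fun t => |f t|))
    (m N : ℕ) (p : ℝ) (hp : p ∈ Set.Ioo (0:ℝ) 1) (H μ : ℝ) (hH : 0 < H) (hμ : 0 < μ)
    (hbd : ∀ t, f t ≤ 2 * H)
    (hspikes : ∀ a : ℤ,
      (((Finset.Icc a (a + N - 1)).filter (fun t => H ≤ f t)).card : ℝ) ≤ μ * N)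
    (x : Fin m → ℤ) (ft : ℤ → ℝ)
    (hft : ∀ t, ft t = ∑ v : Fin m → Bool,
      p ^ (Finset.univ.filter (fun i => v i)).card
        * (1 - p) ^ (m - (Finset.univ.filter (fun i => v i)).card)
        * f (t + ∑ i ∈ Finset.univ.filter (fun i => v i), x i)) :
    ∀ a : ℤ,
      (((Finset.Icc a (a + N - 1)).filter (fun t => Real.sqrt 2 * H ≤ ft t)).card : ℝ)
        ≤ μ * N / (Real.sqrt 2 - 1) :=
  stmt_7_general f m N p hp H μ hH hbd hspikes x ft hft
end

section
/- Let f, g ∈ ℓ₁(ℤ), δ ∈ (0, 1/64], κ > 0. Let I ⊂ ℤ be an integer interval, and I₁ ∪ I₂ ∪ I₃ = I a partition with |I₃| ∈ [δ|I|/2, δ|I|], |I₂| ≤ δ|I|, and f(t₁) ≥ κ + f(t₃) for all t₁ ∈ I₁, t₃ ∈ I₃. Let X be uniformly distributed on an integer interval J with |J| ≥ |I|. Then P(|{t ∈ I : |f(t) - g(t+X)| ≥ κ/2}| < δ|I|/4) ≤ 64δ. -/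
/-!
Call `t ∈ I` a discrepancy of the shift `x` if `|f t - g (t + x)| ≥ κ/2`, and `x` bad if it has
fewer than `δ|I|/4` discrepancies. Put `M = max_{I₃} f` and `L = {s | g s < M + κ/2}`. For a bad
`x`, every `t ∈ I₃` with `t + x ∉ L` and every `t ∈ I₁` with `t + x ∈ L` is a discrepancy, so most
of `I₃ + x` lies in `L` while `(I + x) ∩ L` has at most `9δ|I|/4` points. The bad shifts of a block
of length `|I|` move `I₃` into `(I + y) ∪ (I + y')`, where `y, y'` are the extreme bad shifts of the
block; double counting the pairs `(x, t) ∈ block × I₃` with `t + x ∈ L` then leaves at most `9δ|I|`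
bad shifts per block. Since `|I| ≤ |J|`, at most `2|J|/|I|` blocks meet `J`, so at most `18δ|J|`
shifts in `J` are bad.
-/

open MeasureTheory Finset

lemma card_filter_le_of_union_eq {α : Type*} [DecidableEq α] {I I₁ I₂ I₃ : Finset α}
    (hcover : I₁ ∪ I₂ ∪ I₃ = I) (p : α → Prop) [DecidablePred p] :
    #(I.filter p) ≤ #(I₁.filter p) + #I₂ + #I₃ := by
  have hsub : I.filter p ⊆ I₁.filter p ∪ I₂ ∪ I₃ := by
    rw [← hcover, filter_union, filter_union]
    gcongr <;> exact filter_subset _ _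
  calc #(I.filter p) ≤ #(I₁.filter p ∪ I₂ ∪ I₃) := card_le_card hsub
    _ ≤ #(I₁.filter p ∪ I₂) + #I₃ := card_union_le _ _
    _ ≤ _ := by gcongr; exact card_union_le _ _

section ShiftedLevelSet

variable (L : ℤ → Prop) [DecidablePred L]

lemma card_filter_add_le_of_diam_le {a₁ a₂ y y' t : ℤ} {C : Finset ℤ}
    (hC : ∀ x ∈ C, y ≤ x ∧ x ≤ y') (hyy' : y' - y ≤ a₂ - a₁ + 1) (ht : t ∈ Icc a₁ a₂) :
    #(C.filter fun x => L (t + x)) ≤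
      #((Icc a₁ a₂).filter fun s => L (s + y)) + #((Icc a₁ a₂).filter fun s => L (s + y')) := by
  have hsub : (C.filter fun x => L (t + x)).image (t + ·) ⊆
      ((Icc a₁ a₂).filter fun s => L (s + y)).image (· + y) ∪
        ((Icc a₁ a₂).filter fun s => L (s + y')).image (· + y') := by
    intro s hs
    simp only [mem_image, mem_filter, mem_union, mem_Icc] at hs ⊢
    obtain ⟨x, ⟨hx, hL⟩, rfl⟩ := hs
    rw [mem_Icc] at ht
    obtain ⟨hyx, hxy'⟩ := hC x hx
    by_cases h : t + x ≤ a₂ + y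
    · exact .inl ⟨t + x - y, ⟨⟨by omega, by omega⟩, by simpa using hL⟩, by ring⟩
    · exact .inr ⟨t + x - y', ⟨⟨by omega, by omega⟩, by simpa using hL⟩, by ring⟩
  calc #(C.filter fun x => L (t + x))
      = #((C.filter fun x => L (t + x)).image (t + ·)) :=
        (card_image_of_injective _ (add_right_injective t)).symm
    _ ≤ _ := card_le_card hsub
    _ ≤ _ := (card_union_le _ _).trans (add_le_add card_image_le card_image_le)

lemma card_mul_le_of_shifts_split {a₁ a₂ : ℤ} {I₁ I₂ I₃ C : Finset ℤ}
    (hcover : I₁ ∪ I₂ ∪ I₃ = Icc a₁ a₂) (hdiam : ∀ x ∈ C, ∀ x' ∈ C, x' - x ≤ a₂ - a₁ + 1)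
    {ε : ℝ} (hε : 0 ≤ ε)
    (h₁ : ∀ x ∈ C, #(I₁.filter fun t => L (t + x)) ≤ ε)
    (h₃ : ∀ x ∈ C, #(I₃.filter fun t => ¬ L (t + x)) ≤ ε) :
    #C * (#I₃ - ε) ≤ #I₃ * (2 * (ε + #I₂ + #I₃)) := by
  rcases C.eq_empty_or_nonempty with rfl | hC
  · simp only [card_empty, CharP.cast_eq_zero, zero_mul]
    positivity
  have hwindow : ∀ x ∈ C, (#((Icc a₁ a₂).filter fun s => L (s + x)) : ℝ) ≤ ε + #I₂ + #I₃ := by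
    intro x hx
    have hle : (#((Icc a₁ a₂).filter fun s => L (s + x)) : ℝ) ≤
        #(I₁.filter fun t => L (t + x)) + #I₂ + #I₃ := by
      exact_mod_cast card_filter_le_of_union_eq hcover _
    linarith [h₁ x hx]
  have hcount := card_nsmul_le_card_nsmul (R := ℝ) (s := C) (t := I₃) (fun x t => L (t + x))
    (m := #I₃ - ε) (n := 2 * (ε + #I₂ + #I₃)) ?_ ?_
  · simpa only [nsmul_eq_mul] using hcount
  · intro x hx
    have hsplit : (#(I₃.filter fun t => L (t + x)) : ℝ) + #(I₃.filter fun t => ¬ L (t + x)) =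
        #I₃ := by exact_mod_cast card_filter_add_card_filter_not _
    simp only [bipartiteAbove]
    linarith [h₃ x hx]
  · intro t ht
    have hI₃ : t ∈ Icc a₁ a₂ := hcover ▸ subset_union_right ht
    have hmin := C.min'_mem hC
    have hmax := C.max'_mem hC
    have hle : (#(C.filter fun x => L (t + x)) : ℝ) ≤
        #((Icc a₁ a₂).filter fun s => L (s + C.min' hC)) +
          #((Icc a₁ a₂).filter fun s => L (s + C.max' hC)) := by
      exact_mod_cast card_filter_add_le_of_diam_le L
        (fun x hx => ⟨C.min'_le x hx, C.le_max' x hx⟩) (hdiam _ hmin _ hmax) hI₃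
    have := hwindow _ hmin
    have := hwindow _ hmax
    simp only [bipartiteBelow]
    linarith

end ShiftedLevelSet

section Discrepancy

variable {f g : ℤ → ℝ} {κ M : ℝ} {I I₁ I₃ : Finset ℤ}

lemma filter_not_lt_subset_discrepancy (hI₃ : I₃ ⊆ I) (hf : ∀ t ∈ I₃, f t ≤ M) (x : ℤ) :
    (I₃.filter fun t => ¬ g (t + x) < M + κ / 2) ⊆
      I.filter fun t => κ / 2 ≤ |f t - g (t + x)| := by
  intro t ht
  rw [mem_filter, not_lt] at ht
  rw [mem_filter, abs_sub_comm]
  exact ⟨hI₃ ht.1, le_abs.2 (.inl (by linarith [hf t ht.1]))⟩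

lemma filter_lt_subset_discrepancy (hI₁ : I₁ ⊆ I) (hf : ∀ t ∈ I₁, M + κ ≤ f t) (x : ℤ) :
    (I₁.filter fun t => g (t + x) < M + κ / 2) ⊆
      I.filter fun t => κ / 2 ≤ |f t - g (t + x)| := by
  intro t ht
  rw [mem_filter] at ht ⊢
  exact ⟨hI₁ ht.1, le_abs.2 (.inl (by linarith [hf t ht.1]))⟩

lemma card_le_of_forall_few_discrepancies {δ : ℝ} (hδ : 0 < δ) {a₁ a₂ : ℤ} {I₂ C : Finset ℤ}
    (hcover : I₁ ∪ I₂ ∪ I₃ = Icc a₁ a₂)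
    (hI₃lo : δ * #(Icc a₁ a₂) / 2 ≤ (#I₃ : ℝ)) (hI₃hi : (#I₃ : ℝ) ≤ δ * #(Icc a₁ a₂))
    (hI₂ : (#I₂ : ℝ) ≤ δ * #(Icc a₁ a₂)) (hgap : ∀ t₁ ∈ I₁, ∀ t₃ ∈ I₃, κ + f t₃ ≤ f t₁)
    (hdiam : ∀ x ∈ C, ∀ x' ∈ C, x' - x ≤ a₂ - a₁ + 1)
    (hfew : ∀ x ∈ C,
      (#((Icc a₁ a₂).filter fun t => κ / 2 ≤ |f t - g (t + x)|) : ℝ) < δ * #(Icc a₁ a₂) / 4) :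
    (#C : ℝ) ≤ 9 * δ * #(Icc a₁ a₂) := by
  set n : ℝ := (#(Icc a₁ a₂) : ℝ)
  rcases C.eq_empty_or_nonempty with rfl | ⟨x₀, hx₀⟩
  · simp only [card_empty, CharP.cast_eq_zero]
    positivity
  have hδn : 0 < δ * n / 4 := (Nat.cast_nonneg _).trans_lt (hfew x₀ hx₀)
  have hn : 0 < n := pos_of_mul_pos_right (by linarith) hδ.le
  have hI₃pos : (0 : ℝ) < #I₃ := by linarith
  obtain ⟨t₃, ht₃, hM⟩ := exists_mem_eq_sup' (card_pos.1 (by exact_mod_cast hI₃pos)) f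
  have hI₁ : I₁ ⊆ Icc a₁ a₂ := hcover ▸ subset_union_left.trans subset_union_left
  have hI₃ : I₃ ⊆ Icc a₁ a₂ := hcover ▸ subset_union_right
  have hbound := card_mul_le_of_shifts_split (fun s => g s < f t₃ + κ / 2) hcover hdiam
    (ε := δ * n / 4) (by positivity)
    (fun x hx => (hfew x hx).le.trans' (by
      exact_mod_cast card_le_card (filter_lt_subset_discrepancy hI₁
        (fun t ht => by linarith [hgap t ht t₃ ht₃]) x)))
    (fun x hx => (hfew x hx).le.trans' (by
      exact_mod_cast card_le_card (filter_not_lt_subset_discrepancy hI₃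
        (fun t ht => hM ▸ le_sup' f ht) x)))
  nlinarith

end Discrepancy

lemma card_mul_le_of_forall_diam_lt {B : Finset ℤ} {b₁ b₂ : ℤ} (hB : B ⊆ Icc b₁ b₂) {n : ℕ}
    (hn : 0 < n) (hnN : n ≤ #(Icc b₁ b₂)) {K : ℝ}
    (hK : ∀ C ⊆ B, (∀ x ∈ C, ∀ x' ∈ C, x' - x < n) → (#C : ℝ) ≤ K) :
    (#B : ℝ) * n ≤ 2 * #(Icc b₁ b₂) * K := by
  have hn' : (0 : ℤ) < n := by exact_mod_cast hn
  have hN : (#(Icc b₁ b₂) : ℤ) = b₂ + 1 - b₁ := by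
    have : 0 < #(Icc b₁ b₂) := hn.trans_le hnN
    rw [Int.card_Icc] at this ⊢
    omega
  set block : ℤ → ℤ := fun x => (x - b₁) / n
  have hmaps : ∀ x ∈ B, block x ∈ Icc 0 ((b₂ - b₁) / n) := by
    intro x hx
    rw [mem_Icc]
    obtain ⟨hx₁, hx₂⟩ := mem_Icc.1 (hB hx)
    exact ⟨Int.ediv_nonneg (by omega) hn'.le, Int.ediv_le_ediv hn' (by omega)⟩
  have hblock : ∀ i ∈ Icc 0 ((b₂ - b₁) / n), (#(B.filter fun x => block x = i) : ℝ) ≤ K := by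
    refine fun i _ => hK _ (filter_subset _ _) fun x hx x' hx' => ?_
    rw [mem_filter] at hx hx'
    have h : (x - b₁) % n + n * block x = x - b₁ := Int.emod_add_mul_ediv _ _
    have h' : (x' - b₁) % n + n * block x' = x' - b₁ := Int.emod_add_mul_ediv _ _
    have := Int.emod_nonneg (x - b₁) hn'.ne'
    have := Int.emod_lt_of_pos (x' - b₁) hn'
    rw [hx.2] at h
    rw [hx'.2] at h'
    linarith
  have hK0 : 0 ≤ K := by simpa using hK ∅ (empty_subset _) (by simp)
  have hblocks : #(Icc 0 ((b₂ - b₁) / n)) * n ≤ 2 * #(Icc b₁ b₂) := by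
    have := Int.ediv_mul_le (b₂ - b₁) hn'.ne'
    have hQ : 0 ≤ (b₂ - b₁) / n := Int.ediv_nonneg (by omega) hn'.le
    zify
    rw [Int.card_Icc, Int.toNat_of_nonneg (by omega), hN]
    linarith
  calc (#B : ℝ) * n
      = (∑ i ∈ Icc 0 ((b₂ - b₁) / n), #(B.filter fun x => block x = i) : ℕ) * n := by
        rw [card_eq_sum_card_fiberwise hmaps]
    _ ≤ (#(Icc 0 ((b₂ - b₁) / n)) * K) * n := by
        push_cast
        gcongr
        exact (sum_le_card_nsmul _ _ _ hblock).trans_eq (nsmul_eq_mul _ _)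
    _ = K * (#(Icc 0 ((b₂ - b₁) / n)) * n : ℕ) := by push_cast; ring
    _ ≤ K * (2 * #(Icc b₁ b₂) : ℕ) := by gcongr
    _ = _ := by push_cast; ring

lemma measure_setOf_eq_of_uniform {Ω : Type*} [MeasurableSpace Ω] (P : Measure Ω) {X : Ω → ℤ}
    (hX : Measurable X) {J : Finset ℤ}
    (hXunif : ∀ j : ℤ, P {ω | X ω = j} = if j ∈ J then ((#J : ENNReal))⁻¹ else 0)
    (p : ℤ → Prop) [DecidablePred p] :
    P {ω | p (X ω)} = #(J.filter p) * ((#J : ENNReal))⁻¹ := by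
  change P (X ⁻¹' {x | p x}) = _
  rw [← Measure.map_apply hX (.of_discrete),
    ← Measure.tsum_indicator_apply_singleton _ _ (.of_discrete)]
  simp_rw [Measure.map_apply hX (.of_discrete), Set.preimage, Set.mem_singleton_iff, hXunif]
  rw [tsum_eq_sum (s := J.filter p) fun x hx => ?_]
  · rw [sum_congr rfl fun x hx => ?_, sum_const, nsmul_eq_mul]
    rw [mem_filter] at hx
    simp [hx.1, hx.2]
  · rw [mem_filter, not_and_or] at hx
    rcases hx with hx | hx <;> simp [hx]

theorem stmt_9_general {Ω : Type*} [MeasurableSpace Ω] (P : Measure Ω)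
    (f g : ℤ → ℝ)
    (δ κ : ℝ) (hδ : δ ∈ Set.Ioc (0:ℝ) (1/64))
    (a₁ a₂ : ℤ) (I : Finset ℤ) (hI : I = Finset.Icc a₁ a₂)
    (I₁ I₂ I₃ : Finset ℤ) (hcover : I₁ ∪ I₂ ∪ I₃ = I)
    (hI₃lo : δ * I.card / 2 ≤ (I₃.card : ℝ)) (hI₃hi : (I₃.card : ℝ) ≤ δ * I.card)
    (hI₂ : (I₂.card : ℝ) ≤ δ * I.card)
    (hgap : ∀ t₁ ∈ I₁, ∀ t₃ ∈ I₃, κ + f t₃ ≤ f t₁)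
    (b₁ b₂ : ℤ) (J : Finset ℤ) (hJ : J = Finset.Icc b₁ b₂) (hJI : I.card ≤ J.card)
    (X : Ω → ℤ) (hXmeas : Measurable X)
    (hXunif : ∀ j : ℤ, P {ω | X ω = j} = if j ∈ J then ((J.card : ENNReal))⁻¹ else 0) :
    P {ω | ((I.filter fun t => κ / 2 ≤ |f t - g (t + X ω)|).card : ℝ) < δ * I.card / 4}
      ≤ ENNReal.ofReal (64 * δ) := by
  classical
  obtain ⟨hδ, -⟩ := hδ
  subst hI hJ
  rw [measure_setOf_eq_of_uniform P hXmeas hXunif (fun x =>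
    (#((Icc a₁ a₂).filter fun t => κ / 2 ≤ |f t - g (t + x)|) : ℝ) < δ * #(Icc a₁ a₂) / 4),
    ← div_eq_mul_inv]
  refine ENNReal.div_le_of_le_mul ?_
  rw [← ENNReal.ofReal_natCast, ← ENNReal.ofReal_natCast, ← ENNReal.ofReal_mul (by positivity)]
  refine ENNReal.ofReal_le_ofReal ?_
  set B := (Icc b₁ b₂).filter fun x =>
    (#((Icc a₁ a₂).filter fun t => κ / 2 ≤ |f t - g (t + x)|) : ℝ) < δ * #(Icc a₁ a₂) / 4
  rcases Nat.eq_zero_or_pos #(Icc a₁ a₂) with hn | hn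
  · have : B = ∅ := filter_false_of_mem fun x _ => by simp [hn]
    simp only [this, card_empty, CharP.cast_eq_zero]
    positivity
  have hIcc : (#(Icc a₁ a₂) : ℤ) = a₂ - a₁ + 1 := by rw [Int.card_Icc] at hn ⊢; omega
  have hB := card_mul_le_of_forall_diam_lt (B := B) (filter_subset _ _) hn hJI
    (K := 9 * δ * #(Icc a₁ a₂)) fun C hC hdiam =>
      card_le_of_forall_few_discrepancies hδ hcover hI₃lo hI₃hi hI₂ hgap
        (fun x hx x' hx' => by linarith [hdiam x hx x' hx'])
        (fun x hx => (mem_filter.1 (hC hx)).2)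
  have hB18 : (#B : ℝ) ≤ 18 * δ * #(Icc b₁ b₂) :=
    le_of_mul_le_mul_right (by linarith) (by exact_mod_cast hn : (0 : ℝ) < #(Icc a₁ a₂))
  linarith [mul_nonneg hδ.le (Nat.cast_nonneg (α := ℝ) #(Icc b₁ b₂))]

/-- Averaging lemma: given a partition of an interval `I` into `I₁ ∪ I₂ ∪ I₃`
where `f` is larger by `κ` on `I₁` than on `I₃`, a uniform random shift `X` of
`g` typically creates at least `δ|I|/4` points of `I` where `|f - g(·+X)| ≥ κ/2`. -/
theorem stmt_9 {Ω : Type*} [MeasurableSpace Ω] (P : Measure Ω)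
    [IsProbabilityMeasure P] (f g : ℤ → ℝ)
    (hfsum : Summable fun t => |f t|) (hgsum : Summable fun t => |g t|)
    (δ κ : ℝ) (hδ : δ ∈ Set.Ioc (0:ℝ) (1/64)) (hκ : 0 < κ)
    (a₁ a₂ : ℤ) (I : Finset ℤ) (hI : I = Finset.Icc a₁ a₂)
    (I₁ I₂ I₃ : Finset ℤ) (hcover : I₁ ∪ I₂ ∪ I₃ = I)
    (hd12 : Disjoint I₁ I₂) (hd13 : Disjoint I₁ I₃) (hd23 : Disjoint I₂ I₃)
    (hI₃lo : δ * I.card / 2 ≤ (I₃.card : ℝ)) (hI₃hi : (I₃.card : ℝ) ≤ δ * I.card)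
    (hI₂ : (I₂.card : ℝ) ≤ δ * I.card)
    (hgap : ∀ t₁ ∈ I₁, ∀ t₃ ∈ I₃, κ + f t₃ ≤ f t₁)
    (b₁ b₂ : ℤ) (J : Finset ℤ) (hJ : J = Finset.Icc b₁ b₂) (hJI : I.card ≤ J.card)
    (X : Ω → ℤ) (hXmeas : Measurable X)
    (hXunif : ∀ j : ℤ, P {ω | X ω = j} = if j ∈ J then ((J.card : ENNReal))⁻¹ else 0) :
    P {ω | ((I.filter fun t => κ / 2 ≤ |f t - g (t + X ω)|).card : ℝ) < δ * I.card / 4}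
      ≤ ENNReal.ofReal (64 * δ) :=
  stmt_9_general P f g δ κ hδ a₁ a₂ I hI I₁ I₂ I₃ hcover hI₃lo hI₃hi hI₂ hgap b₁ b₂ J hJ hJI X
    hXmeas hXunif
end

section
/- For a vector x ∈ ℝⁿ with at least k coordinates satisfying |x_i| ≥ ν/√n (for some ν > 0 and integer k ≥ 1), and independent Bernoulli(p) random variables b₁,…,b_n with p ∈ (0,1/2], there is a constant C > 0 depending only on p such that L(∑_{i=1}^n b_i x_i, νt/√n) ≤ C·t/√k for all t ≥ 1. -/
/-!
This is the Erdős–Littlewood–Offord argument. Among the coordinates with `|x i| ≥ δ = ν/√n`,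
at least half have the same sign; call them `T` and `m = #T ≥ k/2`. Every outcome of the
Bernoulli variables is a set `A` of indices, of probability `p ^ #A * (1 - p) ^ (n - #A)`.
Conditioning on `A \ T` only shifts the target point, and the sets `A ⊆ T` whose sum
`∑ i ∈ A, x i` falls in a window `[a, a + δ)` form an antichain, since enlarging `A` moves the sum
by at least `δ`. By the LYM inequality such an antichain has weight at most the largest binomial
probability, which is `≤ 8 / √(p (1 - p) m)`; an interval of length `2tδ` is covered by
`2t + 1` windows.
-/

open Finset MeasureTheory ProbabilityTheory

def binomialTerm (p q : ℝ) (m j : ℕ) : ℝ := m.choose j * p ^ j * q ^ (m - j)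

section BinomialTerm

variable {p q : ℝ}

lemma binomialTerm_nonneg (hp : 0 ≤ p) (hq : 0 ≤ q) (m j : ℕ) :
    0 ≤ binomialTerm p q m j := by
  unfold binomialTerm; positivity

lemma binomialTerm_eq_zero_of_lt {m j : ℕ} (h : m < j) : binomialTerm p q m j = 0 := by
  simp [binomialTerm, Nat.choose_eq_zero_of_lt h]

lemma binomialTerm_symm {m j : ℕ} (hj : j ≤ m) :
    binomialTerm p q m j = binomialTerm q p m (m - j) := by
  simp only [binomialTerm, Nat.choose_symm hj, Nat.sub_sub_self hj]; ring

lemma sum_range_binomialTerm (hpq : p + q = 1) (m : ℕ) :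
    ∑ j ∈ range (m + 1), binomialTerm p q m j = 1 := by
  rw [← (one_pow m : (1 : ℝ) ^ m = 1), ← hpq, add_pow]
  exact sum_congr rfl fun j _ => by simp only [binomialTerm]; ring

lemma sum_range_binomialTerm_add_le (hp : 0 ≤ p) (hq : 0 ≤ q) (hpq : p + q = 1) {m j L : ℕ}
    (hjL : j + L ≤ m) : ∑ i ∈ range (L + 1), binomialTerm p q m (j + i) ≤ 1 :=
  calc ∑ i ∈ range (L + 1), binomialTerm p q m (j + i)
      = ∑ r ∈ Ico j (j + L + 1), binomialTerm p q m r := by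
        rw [sum_Ico_eq_sum_range]; congr 2; omega
    _ ≤ ∑ r ∈ range (m + 1), binomialTerm p q m r := by
        rw [range_eq_Ico]
        exact sum_le_sum_of_subset_of_nonneg (Ico_subset_Ico (Nat.zero_le _) (by omega))
          fun r _ _ => binomialTerm_nonneg hp hq m r
    _ = 1 := sum_range_binomialTerm hpq m

lemma binomialTerm_succ_mul {m j : ℕ} (hj : j < m) :
    binomialTerm p q m (j + 1) * ((j + 1) * q) = binomialTerm p q m j * ((m - j) * p) := by
  have hchoose : (m.choose (j + 1) : ℝ) * (j + 1) = m.choose j * (m - j) := by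
    rw [← Nat.cast_sub hj.le]; exact_mod_cast Nat.choose_succ_right_eq m j
  have hpow : q ^ (m - j) = q ^ (m - (j + 1)) * q := by rw [← pow_succ]; congr 1; omega
  simp only [binomialTerm, hpow, pow_succ]
  linear_combination (p ^ j * p * q ^ (m - (j + 1)) * q) * hchoose

lemma one_sub_mul_binomialTerm_le_succ (hp : 0 ≤ p) (hq : 0 < q) (hpq : p + q = 1)
    {m j : ℕ} (hj : j < m) {a : ℝ} (ha : 0 ≤ a) (hja : (j : ℝ) + 1 ≤ m * p + a)
    (hpqm : 0 < p * q * m) :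
    (1 - 2 * a / (p * q * m)) * binomialTerm p q m j ≤ binomialTerm p q m (j + 1) := by
  set S := p * q * m
  have hjm : (j : ℝ) < m := by exact_mod_cast hj
  have hRHS : 0 ≤ (m - j) * p := mul_nonneg (sub_nonneg.2 hjm.le) hp
  have key : (1 - 2 * a / S) * ((j + 1) * q) ≤ (m - j) * p := by
    rcases le_total (1 - 2 * a / S) 0 with hε | hε
    · exact (mul_nonpos_of_nonpos_of_nonneg hε (by positivity)).trans hRHS
    have hup : (j + 1) * q ≤ S + a := by
      have := mul_le_mul_of_nonneg_right hja hq.le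
      have : a * q ≤ a := mul_le_of_le_one_right ha (by linarith)
      linarith
    have hdown : S - a ≤ (m - j) * p := by
      have hmj : (m : ℝ) * q - a + 1 ≤ m - j := by rw [show q = 1 - p by linarith]; linarith
      have := mul_le_mul_of_nonneg_right hmj hp
      have : a * p ≤ a := mul_le_of_le_one_right ha (by linarith)
      have : S = m * q * p := by ring
      linarith
    have hmid : (1 - 2 * a / S) * (S + a) ≤ S - a := by
      have : (1 - 2 * a / S) * (S + a) = S - a - 2 * a ^ 2 / S := by field_simp; ring
      rw [this]; linarith [(by positivity : 0 ≤ 2 * a ^ 2 / S)]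
    calc (1 - 2 * a / S) * ((j + 1) * q) ≤ (1 - 2 * a / S) * (S + a) :=
          mul_le_mul_of_nonneg_left hup hε
      _ ≤ (m - j) * p := hmid.trans hdown
  rw [← mul_le_mul_iff_of_pos_right (by positivity : (0 : ℝ) < (j + 1) * q),
    binomialTerm_succ_mul hj]
  calc (1 - 2 * a / S) * binomialTerm p q m j * ((j + 1) * q)
      = binomialTerm p q m j * ((1 - 2 * a / S) * ((j + 1) * q)) := by ring
    _ ≤ binomialTerm p q m j * ((m - j) * p) :=
        mul_le_mul_of_nonneg_left key (binomialTerm_nonneg hp hq.le m j)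

lemma one_sub_mul_binomialTerm_le_add (hp : 0 ≤ p) (hq : 0 < q) (hpq : p + q = 1)
    {m j : ℕ} {a : ℝ} (ha : 0 ≤ a) (hpqm : 0 < p * q * m) (i : ℕ) (him : j + i ≤ m)
    (hia : (j + i : ℝ) ≤ m * p + a) (hiε : i * (2 * a / (p * q * m)) ≤ 1) :
    (1 - i * (2 * a / (p * q * m))) * binomialTerm p q m j ≤ binomialTerm p q m (j + i) := by
  induction i with
  | zero => simp
  | succ i ih =>
    set ε := 2 * a / (p * q * m)
    have hε : 0 ≤ ε := by positivity
    push_cast at hia hiε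
    have hiε' : (i : ℝ) * ε ≤ 1 := by nlinarith
    have hprev := ih (by omega) (by linarith) hiε'
    have hstep := one_sub_mul_binomialTerm_le_succ hp hq hpq (j := j + i) (by omega) ha
      (by push_cast; linarith) hpqm
    have hb := binomialTerm_nonneg hp hq.le m j
    rw [Nat.cast_succ]
    calc (1 - ((i : ℝ) + 1) * ε) * binomialTerm p q m j
        ≤ (1 - ε) * ((1 - i * ε) * binomialTerm p q m j) := by
          have := mul_nonneg (mul_nonneg (Nat.cast_nonneg i) (sq_nonneg ε)) hb
          linarith [show (1 - ε) * ((1 - i * ε) * binomialTerm p q m j) =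
            (1 - ((i : ℝ) + 1) * ε) * binomialTerm p q m j + i * ε ^ 2 * binomialTerm p q m j by
              ring]
      _ ≤ (1 - ε) * binomialTerm p q m (j + i) :=
          mul_le_mul_of_nonneg_left hprev (by nlinarith)
      _ ≤ binomialTerm p q m (j + (i + 1)) := hstep

/-- The ratio of consecutive terms stays above `1 - 2(L + 1)/(pqm)` for the `L = ⌊√(pqm)/4⌋`
indices after `j ≤ mp`, so these `L + 1` terms are at least half the `j`-th one, and they sum to
at most `1`. -/
lemma binomialTerm_le_of_le_mul (hp : 0 < p) (hq : 0 < q) (hpq : p + q = 1) {m : ℕ}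
    (hm : 0 < m) {j : ℕ} (hj : (j : ℝ) ≤ m * p) :
    binomialTerm p q m j ≤ 8 / √(p * q * m) := by
  set S := p * q * m
  have hS : 0 < S := by positivity
  set s := √S
  have hs : 0 < s := Real.sqrt_pos.2 hS
  have hs2 : s ^ 2 = S := Real.sq_sqrt hS.le
  set L := ⌊s / 4⌋₊
  have hL : (L : ℝ) ≤ s / 4 := Nat.floor_le (by positivity)
  have hLs : s / 4 < L + 1 := Nat.lt_floor_add_one _
  have hLL : (L : ℝ) ≤ L ^ 2 := by exact_mod_cast Nat.le_self_pow two_ne_zero L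
  have hL2 : (L : ℝ) ^ 2 ≤ S / 16 := by
    have := pow_le_pow_left₀ (Nat.cast_nonneg L) hL 2
    rw [div_pow, hs2] at this; linarith
  set ε := 2 * ((L : ℝ) + 1) / S
  have hε0 : 0 ≤ ε := by positivity
  have hLε : (L : ℝ) * ε ≤ 1 / 2 := by
    rw [show (L : ℝ) * ε = (2 * L ^ 2 + 2 * L) / S by ring, div_le_iff₀ hS]; linarith
  have hjL : j + L ≤ m := by
    have hSq : S ≤ m * q := by
      have := mul_le_mul_of_nonneg_right (show p ≤ 1 by linarith)
        (by positivity : (0 : ℝ) ≤ q * m)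
      linarith
    have : (j : ℝ) + L ≤ m := by rw [show q = 1 - p by linarith] at hSq; linarith
    exact_mod_cast this
  set b := binomialTerm p q m
  have hb := binomialTerm_nonneg hp.le hq.le m
  have hhalf : ∀ i ∈ range (L + 1), b j / 2 ≤ b (j + i) := by
    intro i hi
    have hiL : i ≤ L := Nat.lt_succ_iff.1 (mem_range.1 hi)
    have hiL' : (i : ℝ) ≤ L := by exact_mod_cast hiL
    have hiε : (i : ℝ) * ε ≤ 1 / 2 := (mul_le_mul_of_nonneg_right hiL' hε0).trans hLε
    have := one_sub_mul_binomialTerm_le_add hp.le hq hpq (j := j) (a := L + 1) (by positivity)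
      hS i (by omega) (by linarith) (by linarith)
    have := mul_le_mul_of_nonneg_right (show 1 / 2 ≤ 1 - (i : ℝ) * ε by linarith) (hb j)
    linarith
  have hsum : ((L : ℝ) + 1) * (b j / 2) ≤ 1 :=
    calc ((L : ℝ) + 1) * (b j / 2) = ∑ i ∈ range (L + 1), b j / 2 := by simp
      _ ≤ ∑ i ∈ range (L + 1), b (j + i) := sum_le_sum hhalf
      _ ≤ 1 := sum_range_binomialTerm_add_le hp.le hq.le hpq hjL
  rw [le_div_iff₀ hs]
  nlinarith [hb j]

theorem binomialTerm_le (hp : 0 < p) (hq : 0 < q) (hpq : p + q = 1) {m : ℕ} (hm : 0 < m)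
    (j : ℕ) : binomialTerm p q m j ≤ 8 / √(p * q * m) := by
  rcases le_or_gt (j : ℝ) (m * p) with hj | hj
  · exact binomialTerm_le_of_le_mul hp hq hpq hm hj
  rcases le_or_gt j m with hjm | hjm
  · rw [binomialTerm_symm hjm, show p * q * m = q * p * m by ring]
    refine binomialTerm_le_of_le_mul hq hp (by linarith) hm ?_
    rw [Nat.cast_sub hjm, show q = 1 - p by linarith]; linarith
  · rw [binomialTerm_eq_zero_of_lt hjm]; positivity

end BinomialTerm

section LittlewoodOfford

variable {α : Type*} {p q B : ℝ}

lemma sum_pow_mul_pow_le_of_isAntichain [Fintype α] {𝒜 : Finset (Finset α)}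
    (h𝒜 : IsAntichain (· ⊆ ·) (𝒜 : Set (Finset α)))
    (hB : ∀ r, binomialTerm p q (Fintype.card α) r ≤ B) :
    ∑ A ∈ 𝒜, p ^ #A * q ^ (Fintype.card α - #A) ≤ B := by
  set N := Fintype.card α
  have hB0 : 0 ≤ B := binomialTerm_eq_zero_of_lt (Nat.lt_succ_self N) ▸ hB (N + 1)
  have hslice : ∀ r ∈ range (N + 1), ∑ A ∈ 𝒜 with #A = r, p ^ #A * q ^ (N - #A)
      = #(𝒜 # r) / N.choose r * binomialTerm p q N r := by
    intro r hr
    have hch : (N.choose r : ℝ) ≠ 0 :=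
      Nat.cast_ne_zero.2 (Nat.choose_pos (Nat.lt_succ_iff.1 (mem_range.1 hr))).ne'
    rw [sum_congr rfl fun A hA => by rw [(mem_filter.1 hA).2], sum_const, nsmul_eq_mul,
      binomialTerm]
    field_simp
    rw [slice]
    ring
  calc ∑ A ∈ 𝒜, p ^ #A * q ^ (N - #A)
      = ∑ r ∈ range (N + 1), #(𝒜 # r) / N.choose r * binomialTerm p q N r := by
        rw [← sum_fiberwise_of_maps_to (g := card) (t := range (N + 1))
          fun A _ => mem_range.2 (Nat.lt_succ_of_le (card_le_univ A))]
        exact sum_congr rfl hslice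
    _ ≤ ∑ r ∈ range (N + 1), #(𝒜 # r) / N.choose r * B :=
        sum_le_sum fun r _ => mul_le_mul_of_nonneg_left (hB r) (by positivity)
    _ ≤ B := by
        rw [← sum_mul]
        exact mul_le_of_le_one_left hB0 (sum_card_slice_div_choose_le_one h𝒜)

lemma sum_pow_mul_pow_le_of_isAntichain_of_subset_powerset [DecidableEq α] {T : Finset α}
    {𝒜 : Finset (Finset α)} (h𝒜T : 𝒜 ⊆ T.powerset)
    (h𝒜 : IsAntichain (· ⊆ ·) (𝒜 : Set (Finset α)))
    (hB : ∀ r, binomialTerm p q #T r ≤ B) :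
    ∑ A ∈ 𝒜, p ^ #A * q ^ (#T - #A) ≤ B := by
  have hmap : ∀ A ∈ 𝒜, (A.subtype (· ∈ T)).map (Function.Embedding.subtype _) = A :=
    fun A hA => subtype_map_of_mem (mem_powerset.1 (h𝒜T hA))
  have hinj : Set.InjOn (Finset.subtype (· ∈ T)) 𝒜 := fun A hA A' hA' h => by
    rw [← hmap A hA, ← hmap A' hA', h]
  have hanti : IsAntichain (· ⊆ ·)
      ((𝒜.image (Finset.subtype (· ∈ T)) : Finset (Finset T)) : Set (Finset T)) := by
    simp only [coe_image]
    rintro _ ⟨A, hA, rfl⟩ _ ⟨A', hA', rfl⟩ hne hsub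
    refine h𝒜 hA hA' (fun h => hne (h ▸ rfl)) ?_
    rw [← hmap A hA, ← hmap A' hA']
    exact map_subset_map.2 hsub
  have := sum_pow_mul_pow_le_of_isAntichain hanti (by simpa using hB)
  rw [sum_image hinj, Fintype.card_coe] at this
  refine (sum_congr rfl fun A hA => ?_).trans_le this
  rw [← card_map (Function.Embedding.subtype (· ∈ T)), hmap A hA]

lemma isAntichain_filter_sum_mem_Ico {T : Finset α} {x : α → ℝ} {δ : ℝ} (hδ : 0 < δ)
    (hx : ∀ i ∈ T, δ ≤ x i) (a : ℝ) :
    IsAntichain (· ⊆ ·)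
      (({A ∈ T.powerset | ∑ i ∈ A, x i ∈ Set.Ico a (a + δ)} : Finset (Finset α)) :
        Set (Finset α)) := by
  classical
  intro A hA A' hA' hne hsub
  simp only [coe_filter, mem_powerset, Set.mem_Ico] at hA hA'
  obtain ⟨-, hA, -⟩ := hA
  obtain ⟨hA'T, -, hA'⟩ := hA'
  obtain ⟨i, hiA', hiA⟩ := exists_of_ssubset (Finset.ssubset_iff_subset_ne.2 ⟨hsub, hne⟩)
  have hgap : δ ≤ ∑ j ∈ A' \ A, x j :=
    (hx i (hA'T hiA')).trans <| single_le_sum (fun j hj => hδ.le.trans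
      (hx j (hA'T (mem_sdiff.1 hj).1))) (mem_sdiff.2 ⟨hiA', hiA⟩)
  linarith [sum_sdiff hsub (f := x)]

lemma sum_powerset_filter_abs_sum_sub_le [DecidableEq α] {T : Finset α} {x : α → ℝ}
    {δ t : ℝ} (hδ : 0 < δ) (hx : ∀ i ∈ T, δ ≤ x i) (ht : 0 ≤ t) (hp : 0 ≤ p)
    (hq : 0 ≤ q) (hB : ∀ r, binomialTerm p q #T r ≤ B) (c : ℝ) :
    ∑ A ∈ T.powerset with |∑ i ∈ A, x i - c| ≤ t * δ, p ^ #A * q ^ (#T - #A)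
      ≤ (2 * t + 1) * B := by
  have hB0 : 0 ≤ B := binomialTerm_eq_zero_of_lt (Nat.lt_succ_self #T) ▸ hB (#T + 1)
  set a := c - t * δ
  set window : Finset α → ℕ := fun A => ⌊(∑ i ∈ A, x i - a) / δ⌋₊
  have hmaps : ∀ A ∈ {A ∈ T.powerset | |∑ i ∈ A, x i - c| ≤ t * δ},
      window A ∈ range (⌊2 * t⌋₊ + 1) := by
    intro A hA
    have := (abs_le.1 (mem_filter.1 hA).2).2
    refine mem_range.2 (Nat.lt_succ_of_le (Nat.floor_le_floor ?_))
    rw [div_le_iff₀ hδ]; linarith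
  rw [← sum_fiberwise_of_maps_to hmaps]
  calc _ ≤ ∑ v ∈ range (⌊2 * t⌋₊ + 1), B := sum_le_sum fun v _ => ?_
    _ = (⌊2 * t⌋₊ + 1) * B := by simp
    _ ≤ (2 * t + 1) * B :=
        mul_le_mul_of_nonneg_right (by linarith [Nat.floor_le (by positivity : 0 ≤ 2 * t)]) hB0
  have hsub : {A ∈ {A ∈ T.powerset | |∑ i ∈ A, x i - c| ≤ t * δ} | window A = v}
      ⊆ {A ∈ T.powerset | ∑ i ∈ A, x i ∈ Set.Ico (a + v * δ) (a + v * δ + δ)} := by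
    intro A hA
    simp only [mem_filter] at hA ⊢
    obtain ⟨⟨hAT, hAc⟩, hAv⟩ := hA
    have hnonneg : 0 ≤ (∑ i ∈ A, x i - a) / δ :=
      div_nonneg (by linarith [(abs_le.1 hAc).1]) hδ.le
    obtain ⟨hlo, hhi⟩ := (Nat.floor_eq_iff hnonneg).1 hAv
    rw [le_div_iff₀ hδ] at hlo
    rw [div_lt_iff₀ hδ] at hhi
    exact ⟨hAT, by linarith, by linarith⟩
  exact (sum_le_sum_of_subset_of_nonneg hsub fun A _ _ => by positivity).trans
    (sum_pow_mul_pow_le_of_isAntichain_of_subset_powerset (filter_subset _ _)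
      (isAntichain_filter_sum_mem_Ico hδ hx _) hB)

lemma sum_eq_sum_powerset_compl_sum_powerset {M : Type*} [AddCommMonoid M] [Fintype α]
    [DecidableEq α] (T : Finset α) (f : Finset α → M) :
    ∑ A, f A = ∑ C ∈ Tᶜ.powerset, ∑ D ∈ T.powerset, f (C ∪ D) := by
  rw [← sum_product']
  refine sum_nbij' (fun A => (A \ T, A ∩ T)) (fun P => P.1 ∪ P.2) ?_ ?_ ?_ ?_ ?_
  · intro A _
    simp only [mem_product, mem_powerset]
    exact ⟨fun i hi => mem_compl.2 (mem_sdiff.1 hi).2, inter_subset_right⟩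
  · intro P _
    exact mem_univ _
  · intro A _
    exact sdiff_union_inter A T
  · rintro ⟨C, D⟩ hP
    rw [mem_product, mem_powerset, mem_powerset] at hP
    obtain ⟨hC, hD⟩ := hP
    ext i <;> simp only [mem_sdiff, mem_inter, mem_union] <;> grind [mem_compl]
  · intro A _
    rw [sdiff_union_inter]

lemma pow_mul_pow_card_union [Fintype α] [DecidableEq α] {T C D : Finset α} (hC : C ⊆ Tᶜ)
    (hD : D ⊆ T) :
    p ^ #(C ∪ D) * q ^ (Fintype.card α - #(C ∪ D))
      = p ^ #C * q ^ (#Tᶜ - #C) * (p ^ #D * q ^ (#T - #D)) := by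
  have hcard : Fintype.card α - (#C + #D) = (#Tᶜ - #C) + (#T - #D) := by
    have := card_le_card hC; have := card_le_card hD
    have := card_add_card_compl T
    omega
  rw [card_union_of_disjoint (disjoint_compl_left.mono hC hD), hcard]
  ring

theorem sum_filter_abs_sum_sub_le [Fintype α] [DecidableEq α] {T : Finset α} {x : α → ℝ}
    {δ t : ℝ} (hδ : 0 < δ) (hx : (∀ i ∈ T, δ ≤ x i) ∨ ∀ i ∈ T, δ ≤ -x i) (ht : 0 ≤ t)
    (hp : 0 ≤ p) (hq : 0 ≤ q) (hpq : p + q = 1) (hB : ∀ r, binomialTerm p q #T r ≤ B)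
    (c : ℝ) :
    ∑ A with |∑ i ∈ A, x i - c| ≤ t * δ, p ^ #A * q ^ (Fintype.card α - #A)
      ≤ (2 * t + 1) * B := by
  wlog hpos : ∀ i ∈ T, δ ≤ x i generalizing x c
  · convert this (x := -x) (Or.inl (hx.resolve_left hpos)) (-c) (hx.resolve_left hpos) using 3
    rw [← abs_neg]
    simp only [Pi.neg_apply, sum_neg_distrib]
    ring_nf
  rw [sum_filter, sum_eq_sum_powerset_compl_sum_powerset T]
  calc _ = ∑ C ∈ Tᶜ.powerset, p ^ #C * q ^ (#Tᶜ - #C) *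
        ∑ D ∈ T.powerset with |∑ i ∈ D, x i - (c - ∑ i ∈ C, x i)| ≤ t * δ,
          p ^ #D * q ^ (#T - #D) := by
        refine sum_congr rfl fun C hC => ?_
        rw [sum_filter, mul_sum]
        refine sum_congr rfl fun D hD => ?_
        rw [mem_powerset] at hC hD
        have hCD := pow_mul_pow_card_union (p := p) (q := q) hC hD
        rw [sum_union (disjoint_compl_left.mono hC hD),
          show ∑ i ∈ C, x i + ∑ i ∈ D, x i - c = ∑ i ∈ D, x i - (c - ∑ i ∈ C, x i) by ring]
        split_ifs <;> simp [hCD]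
    _ ≤ ∑ C ∈ Tᶜ.powerset, p ^ #C * q ^ (#Tᶜ - #C) * ((2 * t + 1) * B) :=
        sum_le_sum fun C _ => mul_le_mul_of_nonneg_left
          (sum_powerset_filter_abs_sum_sub_le hδ hpos ht hp hq hB _) (by positivity)
    _ = (2 * t + 1) * B := by rw [← sum_mul, sum_pow_mul_eq_add_pow, hpq, one_pow, one_mul]

end LittlewoodOfford

section Bernoulli

variable {Ω ι : Type*} [MeasurableSpace Ω] [Fintype ι] {P : Measure Ω} {b : ι → Ω → ℝ}
  {p q : ℝ}

lemma ae_forall_eq_one_or_eq_zero [IsProbabilityMeasure P] (hmeas : ∀ i, Measurable (b i))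
    (hp : 0 ≤ p) (hq : 0 ≤ q) (hpq : p + q = 1) (hone : ∀ i, P {ω | b i ω = 1} = ENNReal.ofReal p)
    (hzero : ∀ i, P {ω | b i ω = 0} = ENNReal.ofReal q) :
    ∀ᵐ ω ∂P, ∀ i, b i ω = 1 ∨ b i ω = 0 := by
  refine ae_all_iff.2 fun i => ?_
  have hdisj : Disjoint {ω | b i ω = 1} {ω | b i ω = 0} :=
    Set.disjoint_left.2 fun ω h1 h0 => one_ne_zero (h1.symm.trans h0)
  have hunion : P ({ω | b i ω = 1} ∪ {ω | b i ω = 0}) = 1 := by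
    rw [measure_union hdisj (hmeas i (measurableSet_singleton 0)), hone, hzero,
      ← ENNReal.ofReal_add hp hq, hpq, ENNReal.ofReal_one]
  rw [ae_iff, ← Set.compl_ofPred, Set.ofPred_or]
  exact (prob_compl_eq_zero_iff ((hmeas i (measurableSet_singleton 1)).union
    (hmeas i (measurableSet_singleton 0)))).2 hunion

lemma measure_forall_eq_ite_mem (hind : iIndepFun b P)
    (hone : ∀ i, P {ω | b i ω = 1} = ENNReal.ofReal p)
    (hzero : ∀ i, P {ω | b i ω = 0} = ENNReal.ofReal q) (hp : 0 ≤ p) (hq : 0 ≤ q)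
    [DecidableEq ι] (A : Finset ι) :
    P {ω | ∀ i, b i ω = if i ∈ A then 1 else 0}
      = ENNReal.ofReal (p ^ #A * q ^ (Fintype.card ι - #A)) := by
  have hfactor := hind.measure_inter_preimage_eq_mul univ
    (sets := fun i => {if i ∈ A then (1 : ℝ) else 0}) fun i _ => measurableSet_singleton _
  have hfactor_i : ∀ i, P (b i ⁻¹' {if i ∈ A then (1 : ℝ) else 0})
      = if i ∈ A then ENNReal.ofReal p else ENNReal.ofReal q := fun i => by
    split_ifs
    exacts [hone i, hzero i]
  simp only [mem_univ, Set.iInter_true, hfactor_i] at hfactor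
  convert hfactor using 1
  · congr 1; ext ω; simp
  rw [prod_ite, prod_const, prod_const, ENNReal.ofReal_mul (by positivity),
    ENNReal.ofReal_pow hp, ENNReal.ofReal_pow hq, filter_mem_eq_inter, univ_inter,
    filter_not, filter_mem_eq_inter, univ_inter, ← compl_eq_univ_sdiff, card_compl]

theorem measure_sum_mul_le [IsProbabilityMeasure P] (hmeas : ∀ i, Measurable (b i))
    (hind : iIndepFun b P) (hp : 0 ≤ p) (hq : 0 ≤ q) (hpq : p + q = 1)
    (hone : ∀ i, P {ω | b i ω = 1} = ENNReal.ofReal p)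
    (hzero : ∀ i, P {ω | b i ω = 0} = ENNReal.ofReal q) (x : ι → ℝ) (s : ℝ → Prop)
    [DecidablePred s] :
    P {ω | s (∑ i, b i ω * x i)}
      ≤ ENNReal.ofReal (∑ A with s (∑ i ∈ A, x i), p ^ #A * q ^ (Fintype.card ι - #A)) := by
  classical
  set E : Finset ι → Set Ω := fun A => {ω | ∀ i, b i ω = if i ∈ A then 1 else 0}
  set good : Finset (Finset ι) := {A | s (∑ i ∈ A, x i)}
  have hcover : {ω | s (∑ i, b i ω * x i)} ≤ᵐ[P] ⋃ A ∈ good, E A := by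
    filter_upwards [ae_forall_eq_one_or_eq_zero hmeas hp hq hpq hone hzero] with ω hω hs
    have hsum : ∑ i, b i ω * x i = ∑ i ∈ {i | b i ω = 1}, x i := by
      rw [sum_filter]
      exact sum_congr rfl fun i _ => by rcases hω i with h | h <;> simp [h]
    refine Set.mem_iUnion₂.2
      ⟨({i | b i ω = 1} : Finset ι), mem_filter.2 ⟨mem_univ _, hsum ▸ hs⟩, fun i => ?_⟩
    rcases hω i with h | h <;> simp [h]
  calc P {ω | s (∑ i, b i ω * x i)} ≤ P (⋃ A ∈ good, E A) :=
        measure_mono_ae hcover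
    _ ≤ ∑ A ∈ good, P (E A) := measure_biUnion_finset_le _ _
    _ = _ := by
        simp only [E, measure_forall_eq_ite_mem hind hone hzero hp hq]
        rw [ENNReal.ofReal_sum_of_nonneg fun A _ => by positivity]

end Bernoulli

lemma exists_same_sign_of_le_abs {ι : Type*} (K : Finset ι) {x : ι → ℝ} {δ : ℝ}
    (hK : ∀ i ∈ K, δ ≤ |x i|) :
    ∃ T : Finset ι, #K ≤ 2 * #T ∧ ((∀ i ∈ T, δ ≤ x i) ∨ ∀ i ∈ T, δ ≤ -x i) := by
  have hsplit := card_filter_add_card_filter_not (s := K) (fun i => 0 ≤ x i)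
  rcases le_total #{i ∈ K | ¬0 ≤ x i} #{i ∈ K | 0 ≤ x i} with h | h
  · refine ⟨{i ∈ K | 0 ≤ x i}, by omega, Or.inl fun i hi => ?_⟩
    obtain ⟨hiK, hxi⟩ := mem_filter.1 hi
    simpa [abs_of_nonneg hxi] using hK i hiK
  · refine ⟨{i ∈ K | ¬0 ≤ x i}, by omega, Or.inr fun i hi => ?_⟩
    obtain ⟨hiK, hxi⟩ := mem_filter.1 hi
    simpa [abs_of_neg (not_le.1 hxi)] using hK i hiK

lemma two_mul_add_one_mul_div_sqrt_le {c t k m : ℝ} (hc : 0 < c) (ht : 1 ≤ t) (hk : 1 ≤ k)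
    (hkm : k ≤ 2 * m) :
    (2 * t + 1) * (8 / √(c * m)) ≤ 24 * √2 / √c * t / √k := by
  have hsk : √k ≤ √2 * √m := by
    rw [← Real.sqrt_mul zero_le_two]; exact Real.sqrt_le_sqrt hkm
  have : 0 < √m := Real.sqrt_pos.2 (by linarith)
  have : 0 < √k := Real.sqrt_pos.2 (by linarith)
  rw [Real.sqrt_mul hc.le]
  calc (2 * t + 1) * (8 / (√c * √m))
      ≤ 24 * √2 * t / (√c * (√2 * √m)) := by
        rw [show 24 * √2 * t / (√c * (√2 * √m)) = 24 * t / (√c * √m) by field_simp,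
          mul_div_assoc']
        gcongr ?_ / _; linarith
    _ ≤ 24 * √2 / √c * t / √k := by
        rw [div_mul_eq_mul_div, div_div]; gcongr

/-- Lévy–Kolmogorov–Rogozin consequence: if at least `k` coordinates of `x`
have absolute value at least `ν/√n`, then the Lévy concentration function of
the Bernoulli sum at radius `νt/√n` is at most `Ct/√k`, with `C` depending only
on `p`. -/
theorem stmt_13 (p : ℝ) (hp : p ∈ Set.Ioc (0:ℝ) (1/2)) :
    ∃ C : ℝ, 0 < C ∧
      ∀ {Ω : Type} [MeasurableSpace Ω] (P : Measure Ω), IsProbabilityMeasure P →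
      ∀ (n : ℕ) (b : Fin n → Ω → ℝ), (∀ i, Measurable (b i)) →
        iIndepFun b P →
        (∀ i, P {ω | b i ω = 1} = ENNReal.ofReal p) →
        (∀ i, P {ω | b i ω = 0} = ENNReal.ofReal (1 - p)) →
      ∀ (x : Fin n → ℝ) (ν : ℝ), 0 < ν →
      ∀ k : ℕ, 1 ≤ k →
        (k : ℝ) ≤ ((Finset.univ.filter fun i => ν / Real.sqrt n ≤ |x i|).card : ℝ) →
      ∀ t : ℝ, 1 ≤ t → ∀ lam : ℝ,
        P {ω | |(∑ i, b i ω * x i) - lam| ≤ ν * t / Real.sqrt n}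
          ≤ ENNReal.ofReal (C * t / Real.sqrt k) := by
  obtain ⟨hp0, hp1⟩ := hp
  have hq0 : 0 < 1 - p := by linarith
  refine ⟨24 * √2 / √(p * (1 - p)), by positivity, ?_⟩
  intro Ω _ P _ n b hmeas hind hone hzero x ν hν k hk hkK t ht lam
  set δ := ν / √n
  obtain ⟨T, hKT, hTx⟩ := exists_same_sign_of_le_abs {i | δ ≤ |x i|}
    fun i hi => (mem_filter.1 hi).2
  have hkT : (k : ℝ) ≤ 2 * #T := hkK.trans (by exact_mod_cast hKT)
  have hT : 0 < #T := by
    have : (0 : ℝ) < #T := by linarith [(by exact_mod_cast hk : (1 : ℝ) ≤ k)]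
    exact_mod_cast this
  have hδ : 0 < δ := by
    obtain ⟨i, -⟩ := card_pos.1 hT
    have : (0 : ℝ) < n := by exact_mod_cast i.pos
    positivity
  calc P {ω | |(∑ i, b i ω * x i) - lam| ≤ ν * t / √n}
      ≤ ENNReal.ofReal
          (∑ A with |∑ i ∈ A, x i - lam| ≤ t * δ, p ^ #A * (1 - p) ^ (n - #A)) := by
        rw [show ν * t / √n = t * δ by ring]
        simpa using measure_sum_mul_le hmeas hind hp0.le hq0.le (by ring) hone hzero x
          (fun y => |y - lam| ≤ t * δ)
    _ ≤ ENNReal.ofReal (24 * √2 / √(p * (1 - p)) * t / √k) := by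
        refine ENNReal.ofReal_le_ofReal ((le_of_eq_of_le (by rw [Fintype.card_fin])
          (sum_filter_abs_sum_sub_le (t := t) hδ hTx (by linarith) hp0.le hq0.le (by ring)
            (binomialTerm_le hp0 hq0 (by ring) hT) lam)).trans ?_)
        exact two_mul_add_one_mul_div_sqrt_le (by positivity) ht (by exact_mod_cast hk) hkT
end

section
/- Let n ≥ 2 and define f : ℤ → ℝ by f(t) = (1/m₀)·2^{-|t|/√n}, where m₀ = ∑_{t ∈ ℤ} 2^{-|t|/√n}. Then f is positive, ‖f‖₁ = 1, log₂ f is (1/√n)-Lipschitz, and there is a universal constant c > 0 such that f(t) ≥ (c/√n)·1_{[-√n - 1, √n + 1]}(t) for all t ∈ ℤ. -/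
/-!
Writing `r = 2^{-1/√n}`, the profile is `2^{-|t|/√n} = r^{|t|}`, so `m₀ = (1 + r)/(1 - r)` is a
two-sided geometric series. Bernoulli's inequality for the exponent `1/√n ∈ (0, 1]` gives
`1 - r ≥ 1/(2√n)`, hence `m₀ ≤ 4√n`; on `|t| ≤ √n + 1 ≤ 2√n` the profile is at least `1/4`, so
`f ≥ 1/(16√n)` there. The Lipschitz bound is the triangle inequality `||t + 1| - |t|| ≤ 1`.
-/

open Real

lemma hasSum_pow_natAbs {r : ℝ} (hr₀ : 0 ≤ r) (hr₁ : r < 1) :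
    HasSum (fun t : ℤ => r ^ t.natAbs) ((1 + r) / (1 - r)) := by
  have h := hasSum_geometric_of_lt_one hr₀ hr₁
  have hr : 1 - r ≠ 0 := (sub_pos.2 hr₁).ne'
  rw [show (1 + r) / (1 - r) = (1 - r)⁻¹ + (1 - r)⁻¹ - r ^ (0 : ℤ).natAbs by
    rw [Int.natAbs_zero, pow_zero]; field_simp; ring]
  exact HasSum.of_nat_of_neg (f := fun t : ℤ => r ^ t.natAbs) (by simpa using h) (by simpa using h)

lemma rpow_neg_abs_div_eq_pow_natAbs {b : ℝ} (hb : 0 ≤ b) (s : ℝ) (t : ℤ) :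
    b ^ (-|(t : ℝ)| / s) = (b ^ (-1 / s)) ^ t.natAbs := by
  rw [← rpow_natCast, ← rpow_mul hb, Nat.cast_natAbs, Int.cast_abs]
  ring_nf

lemma summable_rpow_neg_abs_div {b s : ℝ} (hb : 1 < b) (hs : 0 < s) :
    Summable (fun t : ℤ => b ^ (-|(t : ℝ)| / s)) := by
  simp_rw [rpow_neg_abs_div_eq_pow_natAbs (zero_le_one.trans hb.le)]
  refine (hasSum_pow_natAbs (by positivity) ?_).summable
  exact rpow_lt_one_of_one_lt_of_neg hb (by rw [neg_div]; exact neg_neg_of_pos (by positivity))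

lemma inv_two_mul_le_one_sub_two_rpow_neg_inv {s : ℝ} (hs : 1 ≤ s) :
    1 / (2 * s) ≤ 1 - (2 : ℝ) ^ (-1 / s) := by
  have hs₀ : 0 < s := by linarith
  have h := rpow_one_add_le_one_add_mul_self (s := -1 / 2) (by norm_num)
    (p := 1 / s) (by positivity) (by rw [div_le_one hs₀]; exact hs)
  rw [show (1 : ℝ) + -1 / 2 = 2⁻¹ by norm_num, inv_rpow (by norm_num),
    ← rpow_neg (by norm_num)] at h
  rw [neg_div]
  have : 1 / s * (-1 / 2) = -(1 / (2 * s)) := by field_simp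
  linarith

lemma tsum_two_rpow_neg_abs_div_le {s : ℝ} (hs : 1 ≤ s) :
    ∑' t : ℤ, (2 : ℝ) ^ (-|(t : ℝ)| / s) ≤ 4 * s := by
  set r := (2 : ℝ) ^ (-1 / s)
  have hgap := inv_two_mul_le_one_sub_two_rpow_neg_inv hs
  have hr₁ : r < 1 := by
    have : 0 < 1 / (2 * s) := by positivity
    linarith
  simp_rw [rpow_neg_abs_div_eq_pow_natAbs zero_le_two]
  rw [(hasSum_pow_natAbs (by positivity) hr₁).tsum_eq, div_le_iff₀ (by linarith)]
  have : 1 ≤ 2 * s * (1 - r) := by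
    rwa [div_le_iff₀' (by positivity)] at hgap
  nlinarith

lemma inv_four_le_two_rpow_neg_abs_div {s x : ℝ} (hs : 1 ≤ s) (hx : |x| ≤ s + 1) :
    1 / 4 ≤ (2 : ℝ) ^ (-|x| / s) := by
  have h : -2 ≤ -|x| / s := by
    rw [neg_div, neg_le_neg_iff, div_le_iff₀ (by linarith)]
    linarith
  calc (1 / 4 : ℝ) = 2 ^ (-2 : ℝ) := by norm_num [rpow_neg]
    _ ≤ 2 ^ (-|x| / s) := rpow_le_rpow_of_exponent_le one_le_two h

lemma abs_logb_mul_two_rpow_neg_abs_div_sub_le {a s : ℝ} (ha : 0 < a) (hs : 0 < s) (t : ℤ) :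
    |logb 2 (a * 2 ^ (-|((t + 1 : ℤ) : ℝ)| / s)) - logb 2 (a * 2 ^ (-|(t : ℝ)| / s))|
      ≤ 1 / s := by
  rw [logb_mul ha.ne' (by positivity), logb_mul ha.ne' (by positivity),
    logb_rpow zero_lt_two (by norm_num), logb_rpow zero_lt_two (by norm_num),
    show logb 2 a + -|((t + 1 : ℤ) : ℝ)| / s - (logb 2 a + -|(t : ℝ)| / s)
      = -(|(t : ℝ) + 1| - |(t : ℝ)|) / s by push_cast; ring,
    abs_div, abs_neg, abs_of_pos hs]
  gcongr
  simpa using abs_abs_sub_abs_le_abs_sub ((t : ℝ) + 1) t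

/-- The normalized discrete exponential profile `f(t) = 2^{-|t|/√n}/m₀` is a
probability density on ℤ with `(1/√n)`-Lipschitz base-2 logarithm, and it
dominates `c/√n` on the interval `[-√n - 1, √n + 1]` for a universal `c > 0`. -/
theorem stmt_19 :
    ∃ c : ℝ, 0 < c ∧ ∀ n : ℕ, 2 ≤ n →
      ∀ m₀ : ℝ, m₀ = (∑' t : ℤ, (2:ℝ) ^ (-(|t| : ℝ) / Real.sqrt n)) →
      ∀ f : ℤ → ℝ, (∀ t : ℤ, f t = (1 / m₀) * (2:ℝ) ^ (-(|t| : ℝ) / Real.sqrt n)) →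
        (∀ t, 0 < f t) ∧
        (Summable fun t : ℤ => f t) ∧ (∑' t : ℤ, f t) = 1 ∧
        (∀ t : ℤ, |Real.logb 2 (f (t + 1)) - Real.logb 2 (f t)| ≤ 1 / Real.sqrt n) ∧
        (∀ t : ℤ, |(t : ℝ)| ≤ Real.sqrt n + 1 → c / Real.sqrt n ≤ f t) := by
  refine ⟨1 / 16, by norm_num, fun n hn m₀ hm₀ f hf => ?_⟩
  set s := √(n : ℝ)
  have hs : 1 ≤ s := one_le_sqrt.2 (by exact_mod_cast (by omega : 1 ≤ n))
  have hs₀ : 0 < s := by linarith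
  have hsum := summable_rpow_neg_abs_div one_lt_two hs₀
  have hm₀_pos : 0 < m₀ := hm₀ ▸ hsum.tsum_pos (fun _ => by positivity) 0 (by positivity)
  have hm₀_le : m₀ ≤ 4 * s := hm₀ ▸ tsum_two_rpow_neg_abs_div_le hs
  refine ⟨fun t => by rw [hf]; positivity, (hsum.mul_left (1 / m₀)).congr fun t => (hf t).symm,
    ?_, fun t => ?_, fun t ht => ?_⟩
  · rw [tsum_congr hf, tsum_mul_left, ← hm₀, one_div_mul_cancel hm₀_pos.ne']
  · rw [hf, hf]
    exact abs_logb_mul_two_rpow_neg_abs_div_sub_le (one_div_pos.2 hm₀_pos) hs₀ t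
  · rw [hf]
    calc 1 / 16 / s = 1 / (4 * s) * (1 / 4) := by field_simp; ring
      _ ≤ 1 / m₀ * 2 ^ (-|(t : ℝ)| / s) := by
        gcongr
        exact inv_four_le_two_rpow_neg_abs_div hs ht
end
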